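/- arXiv:1811.03125 — 2 statements merged into one kernel-verified Lean document; each statement's English description precedes it below -/
import Mathlib

section
/- Let v_0, v_1, …, v_p be jointly independent random vectors with v_j ∈ L²(Ω, ℝ^{q_j}). Define z_0 = v_0 and, recursively for j = 1, …, p, z_j = v_j − Σ_{k=0}^{j−1} E_{v_j z_k} (E_{z_k z_k})^† z_k. Then the vectors z_0, …, z_p are pairwise uncorrelated, i.e. E_{z_i z_j} = 0 (the zero matrix) for all i ≠ j. -/
/-!
By induction on `j`, expanding `z_j` by its defining recursion kills every cross term
`E_{z_k z_i}` with `k ≠ i`, and what is left of `E_{z_j z_i}` is `E_{v_j z_i} (1 - E^† E)`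
with `E = E_{z_i z_i}`. Since `E (1 - E^† E) = 0`, it remains to see that `E_{zz} M = 0` forces
`E_{xz} M = 0` for every `x`: the diagonal of `Mᵀ E_{zz} M` consists of the second moments of
the coordinates of `Mᵀ z`, so `Mᵀ z = 0` almost everywhere.
-/

open MeasureTheory Matrix Finset Filter

noncomputable section

/-- The covariance matrix `E_{xy}` of two random vectors. -/
def covM {Ω : Type} [MeasurableSpace Ω] (μ : Measure Ω) {m n : ℕ}
    (x : Ω → Fin m → ℝ) (y : Ω → Fin n → ℝ) : Matrix (Fin m) (Fin n) ℝ :=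
  Matrix.of fun i j => ∫ ω, x ω i * y ω j ∂μ

/-- The squared norm `‖x‖²_Ω` of a random vector. -/
def sqnormOm {Ω : Type} [MeasurableSpace Ω] (μ : Measure Ω) {m : ℕ}
    (x : Ω → Fin m → ℝ) : ℝ :=
  ∫ ω, ∑ j, (x ω j) ^ 2 ∂μ

/-- The Moore–Penrose conditions. -/
def IsMoorePenrose {m n : ℕ} (A : Matrix (Fin m) (Fin n) ℝ)
    (B : Matrix (Fin n) (Fin m) ℝ) : Prop :=
  A * B * A = A ∧ B * A * B = B ∧ (A * B)ᵀ = A * B ∧ (B * A)ᵀ = B * A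

/-- The Moore–Penrose pseudoinverse `M^†`. -/
def mpinv {m n : ℕ} (A : Matrix (Fin m) (Fin n) ℝ) : Matrix (Fin n) (Fin m) ℝ :=
  Classical.epsilon fun B => IsMoorePenrose A B

/-- The symmetric positive semidefinite square root `M^{1/2}` of a PSD matrix. -/
def msqrtM {n : ℕ} (M : Matrix (Fin n) (Fin n) ℝ) : Matrix (Fin n) (Fin n) ℝ :=
  Classical.epsilon fun S => S.PosSemidef ∧ S * S = M

/-- Squared Frobenius norm. -/
def frobSq {m n : ℕ} (A : Matrix (Fin m) (Fin n) ℝ) : ℝ := ∑ i, ∑ j, (A i j) ^ 2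

/-- `(u, v, σ)` is a singular value decomposition of `A`:
`A = ∑ k σ_k u_k v_kᵀ` with orthonormal `u`'s and `v`'s and
nonnegative singular values in decreasing order. -/
def IsSVDOf {m n : ℕ} (A : Matrix (Fin m) (Fin n) ℝ)
    (u : ℕ → Fin m → ℝ) (v : ℕ → Fin n → ℝ) (σ : ℕ → ℝ) : Prop :=
  (∀ k l, k < min m n → l < min m n → u k ⬝ᵥ u l = if k = l then (1 : ℝ) else 0) ∧
  (∀ k l, k < min m n → l < min m n → v k ⬝ᵥ v l = if k = l then (1 : ℝ) else 0) ∧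
  (∀ k, 0 ≤ σ k) ∧ Antitone σ ∧ (∀ k, min m n ≤ k → σ k = 0) ∧
  A = ∑ k ∈ Finset.range (min m n), σ k • vecMulVec (u k) (v k)

/-- Random vectors `v_0, …, v_p` are jointly independent if whenever
`M⁽⁰⁾v_0(ω) + … + M⁽ᵖ⁾v_p(ω) = 0` almost everywhere, each `v_j(ω)` lies in the
null space of `M⁽ʲ⁾` almost everywhere. -/
def JointlyIndependent {Ω : Type} [MeasurableSpace Ω] (μ : Measure Ω) {p : ℕ}
    {q : Fin (p + 1) → ℕ} (v : ∀ j, Ω → Fin (q j) → ℝ) : Prop :=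
  ∀ (N : ℕ) (M : ∀ j, Matrix (Fin N) (Fin (q j)) ℝ),
    (∀ᵐ ω ∂μ, ∑ j, M j *ᵥ v j ω = 0) → ∀ j, ∀ᵐ ω ∂μ, M j *ᵥ v j ω = 0

end

namespace Matrix.IsHermitian

variable {n : ℕ} {A : Matrix (Fin n) (Fin n) ℝ}

-- Since `0⁻¹ = 0`, this inverts the nonzero eigenvalues of `A` and keeps its kernel.
theorem isMoorePenrose_cfc_inv (hA : A.IsHermitian) :
    IsMoorePenrose A (cfc (fun x : ℝ => x⁻¹) A) := by
  have hcont (f : ℝ → ℝ) : ContinuousOn f (spectrum ℝ A) := A.finite_spectrum.continuousOn f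
  have hmul (f g : ℝ → ℝ) : cfc f A * cfc g A = cfc (fun x => f x * g x) A :=
    (cfc_mul f g A (hcont f) (hcont g)).symm
  have hsymm (f : ℝ → ℝ) : (cfc f A)ᵀ = cfc f A := IsSelfAdjoint.cfc (f := f) (a := A)
  nth_rw 1 [← cfc_id' ℝ A hA.isSelfAdjoint]
  have hinv (x : ℝ) : x⁻¹ * x * x⁻¹ = x⁻¹ := by simpa using mul_inv_mul_cancel x⁻¹
  refine ⟨?_, ?_, ?_, ?_⟩ <;> simp only [hmul, hsymm, mul_inv_mul_cancel, hinv]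

theorem mul_mpinv_mul_self (hA : A.IsHermitian) : A * mpinv A * A = A :=
  (Classical.epsilon_spec ⟨_, isMoorePenrose_cfc_inv hA⟩ : IsMoorePenrose A (mpinv A)).1

end Matrix.IsHermitian

section Covariance

variable {Ω : Type} [MeasurableSpace Ω] {μ : Measure Ω} {m n l : ℕ}

theorem MeasureTheory.MemLp.integrable_apply_mul_apply {x : Ω → Fin m → ℝ} {y : Ω → Fin n → ℝ}
    (hx : MemLp x 2 μ) (hy : MemLp y 2 μ) (a : Fin m) (b : Fin n) :
    Integrable (fun ω => x ω a * y ω b) μ :=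
  (hx.eval a).integrable_mul (hy.eval b)

theorem MeasureTheory.MemLp.mulVec {x : Ω → Fin m → ℝ} (A : Matrix (Fin l) (Fin m) ℝ)
    (hx : MemLp x 2 μ) :
    MemLp (fun ω => A *ᵥ x ω) 2 μ :=
  (LinearMap.toContinuousLinearMap A.mulVecLin).comp_memLp' hx

theorem covM_transpose (x : Ω → Fin m → ℝ) (y : Ω → Fin n → ℝ) :
    (covM μ x y)ᵀ = covM μ y x := by
  ext a b
  simp only [covM, transpose_apply, of_apply, mul_comm]

theorem covM_self_isHermitian (y : Ω → Fin n → ℝ) : (covM μ y y).IsHermitian := by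
  rw [IsHermitian, conjTranspose_eq_transpose_of_trivial, covM_transpose]

theorem covM_sub_left {x x' : Ω → Fin m → ℝ} {y : Ω → Fin n → ℝ}
    (hx : MemLp x 2 μ) (hx' : MemLp x' 2 μ) (hy : MemLp y 2 μ) :
    covM μ (x - x') y = covM μ x y - covM μ x' y := by
  ext a b
  simp only [covM, of_apply, Matrix.sub_apply, Pi.sub_apply, sub_mul]
  exact integral_sub (hx.integrable_apply_mul_apply hy a b) (hx'.integrable_apply_mul_apply hy a b)

theorem covM_finset_sum_left {ι : Type*} (s : Finset ι) {x : ι → Ω → Fin m → ℝ}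
    {y : Ω → Fin n → ℝ} (hx : ∀ k ∈ s, MemLp (x k) 2 μ) (hy : MemLp y 2 μ) :
    covM μ (∑ k ∈ s, x k) y = ∑ k ∈ s, covM μ (x k) y := by
  ext a b
  simp only [covM, Matrix.sum_apply, of_apply, Finset.sum_apply, Finset.sum_mul]
  exact integral_finsetSum s fun k hk => (hx k hk).integrable_apply_mul_apply hy a b

theorem covM_mulVec_left {x : Ω → Fin m → ℝ} {y : Ω → Fin n → ℝ} (A : Matrix (Fin l) (Fin m) ℝ)
    (hx : MemLp x 2 μ) (hy : MemLp y 2 μ) :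
    covM μ (fun ω => A *ᵥ x ω) y = A * covM μ x y := by
  ext a b
  simp only [covM, of_apply, mul_apply, mulVec, dotProduct, Finset.sum_mul, mul_assoc]
  rw [integral_finsetSum _ fun c _ => (hx.integrable_apply_mul_apply hy c b).const_mul (A a c)]
  simp only [integral_const_mul]

theorem covM_mulVec_right {x : Ω → Fin m → ℝ} {y : Ω → Fin n → ℝ} (A : Matrix (Fin l) (Fin n) ℝ)
    (hx : MemLp x 2 μ) (hy : MemLp y 2 μ) :
    covM μ x (fun ω => A *ᵥ y ω) = covM μ x y * Aᵀ := by
  rw [← covM_transpose, covM_mulVec_left A hy hx, transpose_mul, covM_transpose]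

theorem covM_eq_zero_of_ae_eq_zero_right (x : Ω → Fin m → ℝ) {y : Ω → Fin n → ℝ}
    (hy : y =ᵐ[μ] 0) : covM μ x y = 0 := by
  ext a b
  simp only [covM, of_apply, Matrix.zero_apply]
  exact integral_eq_zero_of_ae (hy.mono fun ω h => by simp [h])

theorem ae_eq_zero_of_covM_self_eq_zero {y : Ω → Fin n → ℝ} (hy : MemLp y 2 μ)
    (h : covM μ y y = 0) : y =ᵐ[μ] 0 := by
  have hcoord (b : Fin n) : ∀ᵐ ω ∂μ, y ω b = 0 := by
    have hsq : ∫ ω, y ω b * y ω b ∂μ = 0 := congrFun (congrFun h b) b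
    rw [integral_eq_zero_iff_of_nonneg (fun ω => mul_self_nonneg (y ω b))
      (hy.integrable_apply_mul_apply hy b b)] at hsq
    filter_upwards [hsq] with ω hω using mul_self_eq_zero.1 hω
  filter_upwards [ae_all_iff.2 hcoord] with ω hω using funext hω

theorem covM_mul_eq_zero_of_covM_self_mul_eq_zero {x : Ω → Fin m → ℝ} {z : Ω → Fin n → ℝ}
    (hx : MemLp x 2 μ) (hz : MemLp z 2 μ) {M : Matrix (Fin n) (Fin l) ℝ}
    (h : covM μ z z * M = 0) : covM μ x z * M = 0 := by
  have hw := hz.mulVec Mᵀ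
  have hww : covM μ (fun ω => Mᵀ *ᵥ z ω) (fun ω => Mᵀ *ᵥ z ω) = 0 := by
    rw [covM_mulVec_left _ hz hw, covM_mulVec_right _ hz hz, transpose_transpose, h,
      Matrix.mul_zero]
  rw [← transpose_transpose M, ← covM_mulVec_right _ hx hz]
  exact covM_eq_zero_of_ae_eq_zero_right x (ae_eq_zero_of_covM_self_eq_zero hw hww)

theorem covM_sub_sum_mpinv_eq_zero {ι : Type*} {q : ι → ℕ} (s : Finset ι)
    {x : Ω → Fin m → ℝ} {z : ∀ k, Ω → Fin (q k) → ℝ} (hx : MemLp x 2 μ)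
    (hz : ∀ k, MemLp (z k) 2 μ) (horth : ∀ k ∈ s, ∀ l ∈ s, k ≠ l → covM μ (z k) (z l) = 0)
    {i : ι} (hi : i ∈ s) :
    covM μ (fun ω => x ω - ∑ k ∈ s,
      (covM μ x (z k) * mpinv (covM μ (z k) (z k))) *ᵥ z k ω) (z i) = 0 := by
  set P := fun k => covM μ x (z k) * mpinv (covM μ (z k) (z k))
  have hP (k : ι) : MemLp (fun ω => P k *ᵥ z k ω) 2 μ := (hz k).mulVec (P k)
  have hfun : (fun ω => x ω - ∑ k ∈ s, P k *ᵥ z k ω) = x - ∑ k ∈ s, fun ω => P k *ᵥ z k ω := by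
    funext ω
    simp only [Pi.sub_apply, Finset.sum_apply]
  rw [hfun, covM_sub_left hx (memLp_finsetSum' s fun k _ => hP k) (hz i),
    covM_finset_sum_left s (fun k _ => hP k) (hz i),
    Finset.sum_eq_single_of_mem i hi fun k hk hki => by
      rw [covM_mulVec_left _ (hz k) (hz i), horth k hk i hi hki, Matrix.mul_zero],
    covM_mulVec_left _ (hz i) (hz i)]
  set G := covM μ (z i) (z i)
  have hG : G * (1 - mpinv G * G) = 0 := by
    rw [Matrix.mul_sub, Matrix.mul_one, ← Matrix.mul_assoc,
      (covM_self_isHermitian (z i)).mul_mpinv_mul_self, sub_self]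
  calc covM μ x (z i) - P i * G = covM μ x (z i) * (1 - mpinv G * G) := by
        rw [Matrix.mul_sub, Matrix.mul_one, ← Matrix.mul_assoc]
    _ = 0 := covM_mul_eq_zero_of_covM_self_mul_eq_zero hx (hz i) hG

end Covariance

theorem stmt0_general {Ω : Type} [MeasurableSpace Ω] (μ : Measure Ω)
    (p : ℕ) (q : Fin (p + 1) → ℕ) (v z : ∀ j, Ω → Fin (q j) → ℝ)
    (hv : ∀ j, MemLp (v j) 2 μ) (hz : ∀ j, MemLp (z j) 2 μ)
    (hrec : ∀ j, 0 < j → ∀ ω, z j ω =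
      v j ω - ∑ k ∈ Finset.Iio j,
        (covM μ (v j) (z k) * mpinv (covM μ (z k) (z k))) *ᵥ z k ω) :
    ∀ i j, i ≠ j → covM μ (z i) (z j) = 0 := by
  have hlt (j : Fin (p + 1)) : ∀ i < j, covM μ (z j) (z i) = 0 := by
    induction j using WellFoundedLT.induction with
    | _ j ih =>
      intro i hij
      rw [show z j = _ from funext (hrec j ((Fin.zero_le i).trans_lt hij))]
      refine covM_sub_sum_mpinv_eq_zero _ (hv j) hz (fun k hk l hl hkl => ?_) (mem_Iio.2 hij)
      rcases hkl.lt_or_gt with hkl | hlk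
      · rw [← covM_transpose, ih l (mem_Iio.1 hl) k hkl, transpose_zero]
      · exact ih k (mem_Iio.1 hk) l hlk
  intro i j hij
  rcases hij.lt_or_gt with hij | hji
  · rw [← covM_transpose, hlt j i hij, transpose_zero]
  · exact hlt i j hji

/-- the vectors `z_0, …, z_p` obtained from jointly independent
`v_0, …, v_p` by the recursive Gram–Schmidt-type procedure are pairwise
uncorrelated. -/
theorem stmt0 {Ω : Type} [MeasurableSpace Ω] (μ : Measure Ω) [IsProbabilityMeasure μ]
    (p : ℕ) (q : Fin (p + 1) → ℕ) (v z : ∀ j, Ω → Fin (q j) → ℝ)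
    (hv : ∀ j, MemLp (v j) 2 μ) (hz : ∀ j, MemLp (z j) 2 μ)
    (hindep : JointlyIndependent μ v)
    (h0 : z 0 = v 0)
    (hrec : ∀ j, 0 < j → ∀ ω, z j ω =
      v j ω - ∑ k ∈ Finset.Iio j,
        (covM μ (v j) (z k) * mpinv (covM μ (z k) (z k))) *ᵥ z k ω) :
    ∀ i j, i ≠ j → covM μ (z i) (z j) = 0 :=
  stmt0_general μ p q v z hv hz hrec
end

section
/- Let M₁ and M₂ be metric spaces, K₁ ⊆ M₁ and K₂ ⊆ M₂ compact, and f : M₁ × M₂ → ℝ continuous. Suppose sequences (S^{(i)}) ⊆ K₁ and (z^{(i)}) ⊆ K₂ satisfy, for every i, S^{(i+1)} ∈ argmin_{S ∈ K₁} f(S, z^{(i)}) and z^{(i+1)} ∈ argmin_{z ∈ K₂} f(S^{(i+1)}, z), and set P^{(i)} = (S^{(i)}, z^{(i−1)}). Then any cluster point P* = (S*, z*) of the sequence (P^{(i)}) is a coordinate-wise minimum point of f, i.e. S* ∈ argmin_{S ∈ K₁} f(S, z*) and z* ∈ argmin_{z ∈ K₂} f(S*, z). -/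
open MeasureTheory Matrix Finset Filter

/-! The first inequality is a closed condition satisfied by every iterate `(S⁽ⁱ⁺¹⁾, z⁽ⁱ⁾)`, so it
passes to the cluster point. For the second, alternating minimization makes the values
`f(S⁽ⁱ⁺¹⁾, z⁽ⁱ⁾)` decrease, so their cluster value `f(S*, z*)` bounds all of them from below, hence
also `f(S⁽ⁱ⁺¹⁾, z')` for every `z' ∈ K₂`; this is again a closed condition on the iterates. -/


theorem MapClusterPt.le_of_eventually_le {X α β : Type*} [TopologicalSpace X] [TopologicalSpace α]
    [Preorder α] [OrderClosedTopology α] {F : Filter β} {u : β → X} {x : X} {g h : X → α}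
    (hx : MapClusterPt x F u) (hg : Continuous g) (hh : Continuous h)
    (hle : ∀ᶠ i in F, g (u i) ≤ h (u i)) : g x ≤ h x :=
  (isClosed_le hg hh).mem_of_mapClusterPt hx hle

theorem Antitone.le_of_mapClusterPt {ι α : Type*} [Preorder ι] [Preorder α] [TopologicalSpace α]
    [ClosedIicTopology α] {a : ι → α} (ha : Antitone a) {c : α} (hc : MapClusterPt c atTop a)
    (n : ι) : c ≤ a n :=
  isClosed_Iic.mem_of_mapClusterPt hc ((eventually_ge_atTop n).mono fun _ hi => ha hi)

theorem antitone_alternating_min {α β γ : Type*} [Preorder γ] {f : α → β → γ} {A : Set α}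
    {B : Set β} {S : ℕ → α} {z : ℕ → β} (hS : ∀ i, S i ∈ A) (hz : ∀ i, z i ∈ B)
    (hmin₁ : ∀ i, ∀ S' ∈ A, f (S (i + 1)) (z i) ≤ f S' (z i))
    (hmin₂ : ∀ i, ∀ z' ∈ B, f (S (i + 1)) (z (i + 1)) ≤ f (S (i + 1)) z') :
    Antitone fun i => f (S (i + 1)) (z i) :=
  antitone_nat_of_succ_le fun i => (hmin₁ (i + 1) _ (hS (i + 1))).trans (hmin₂ i _ (hz i))

theorem stmt18_general {M₁ M₂ : Type*} [MetricSpace M₁] [MetricSpace M₂]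
    (K₁ : Set M₁) (K₂ : Set M₂)
    (f : M₁ → M₂ → ℝ) (hf : Continuous fun P : M₁ × M₂ => f P.1 P.2)
    (S : ℕ → M₁) (z : ℕ → M₂) (hS : ∀ i, S i ∈ K₁) (hz : ∀ i, z i ∈ K₂)
    (hmin₁ : ∀ i, ∀ S' ∈ K₁, f (S (i + 1)) (z i) ≤ f S' (z i))
    (hmin₂ : ∀ i, ∀ z' ∈ K₂, f (S (i + 1)) (z (i + 1)) ≤ f (S (i + 1)) z')
    (P : ℕ → M₁ × M₂) (hP : ∀ i, P (i + 1) = (S (i + 1), z i))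
    (Pstar : M₁ × M₂) (hcluster : MapClusterPt Pstar Filter.atTop P) :
    (∀ S' ∈ K₁, f Pstar.1 Pstar.2 ≤ f S' Pstar.2) ∧
    (∀ z' ∈ K₂, f Pstar.1 Pstar.2 ≤ f Pstar.1 z') := by
  set Q : ℕ → M₁ × M₂ := fun i => (S (i + 1), z i)
  have hQ : MapClusterPt Pstar atTop Q := by
    have hQP : Q = P ∘ (· + 1) := funext fun i => (hP i).symm
    rwa [hQP, mapClusterPt_comp, map_add_atTop_eq_nat]
  have hlow : ∀ i, f Pstar.1 Pstar.2 ≤ f (S (i + 1)) (z i) :=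
    (antitone_alternating_min hS hz hmin₁ hmin₂).le_of_mapClusterPt
      (hQ.continuousAt_comp hf.continuousAt)
  constructor
  · intro S' hS'
    exact hQ.le_of_eventually_le hf (hf.comp (continuous_const.prodMk continuous_snd))
      (.of_forall fun i => hmin₁ i S' hS')
  · intro z' hz'
    refine hQ.le_of_eventually_le (g := fun _ => f Pstar.1 Pstar.2)
      (h := fun p => f p.1 z') continuous_const
      (hf.comp (continuous_fst.prodMk continuous_const)) (.of_forall fun i => ?_)
    calc f Pstar.1 Pstar.2 ≤ f (S (i + 2)) (z (i + 1)) := hlow (i + 1)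
      _ ≤ f (S (i + 1)) (z (i + 1)) := hmin₁ (i + 1) _ (hS (i + 1))
      _ ≤ f (S (i + 1)) z' := hmin₂ i z' hz'

/-- any cluster point `P* = (S*, z*)` of the alternating
minimization sequence `P^{(i)} = (S^{(i)}, z^{(i−1)})` on compact sets is a
coordinate-wise minimum point of the continuous function `f`. -/
theorem stmt18 {M₁ M₂ : Type*} [MetricSpace M₁] [MetricSpace M₂]
    (K₁ : Set M₁) (K₂ : Set M₂) (hK₁ : IsCompact K₁) (hK₂ : IsCompact K₂)
    (f : M₁ → M₂ → ℝ) (hf : Continuous fun P : M₁ × M₂ => f P.1 P.2)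
    (S : ℕ → M₁) (z : ℕ → M₂) (hS : ∀ i, S i ∈ K₁) (hz : ∀ i, z i ∈ K₂)
    (hmin₁ : ∀ i, ∀ S' ∈ K₁, f (S (i + 1)) (z i) ≤ f S' (z i))
    (hmin₂ : ∀ i, ∀ z' ∈ K₂, f (S (i + 1)) (z (i + 1)) ≤ f (S (i + 1)) z')
    (P : ℕ → M₁ × M₂) (hP : ∀ i, P (i + 1) = (S (i + 1), z i))
    (Pstar : M₁ × M₂) (hcluster : MapClusterPt Pstar Filter.atTop P) :
    (∀ S' ∈ K₁, f Pstar.1 Pstar.2 ≤ f S' Pstar.2) ∧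
    (∀ z' ∈ K₂, f Pstar.1 Pstar.2 ≤ f Pstar.1 z') :=
  stmt18_general K₁ K₂ f hf S z hS hz hmin₁ hmin₂ P hP Pstar hcluster
end
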